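/- Let V be a d-dimensional F_q-vector space and V* its dual. For a function f : V → ℚ define (T_V f)(φ) = ((−1)^d / (q − 1)) · Σ_{v ∈ V} ξ(φ(v)) f(v) on V*, and for g : V* → ℚ define (T_{V*} g)(v) = ((−1)^d / (q − 1)) · Σ_{φ ∈ V*} ξ(φ(v)) g(φ) on V (using the evaluation pairing). If f is F_qˣ-invariant, i.e. f(t·v) = f(v) for all t ∈ F_qˣ and v ∈ V, then T_{V*}(T_V f) = q^d · f. -/

import Mathlib

/-!
Since `ξ` sums to zero over `F_q`, it satisfies `ξ(a) ξ(b) = ∑_{t ∈ F_qˣ} ξ(a - t b)`.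
Evaluation at `u ≠ 0` maps `V*` onto `F_q` with fibres of equal size, so `∑_φ ξ(φ u)` is
`(q - 1) q^d` at `u = 0` and vanishes otherwise. Hence the kernel of `T_{V*} ∘ T_V` is
`∑_φ ξ(φ v) ξ(φ w) = (q - 1) q^d · #{t ∈ F_qˣ : v = t w}`; invariance of `f` under `F_qˣ` turns
the remaining sum into `(q - 1) f(v)`, and the two normalising factors contribute `1 / (q - 1)^2`.
-/

open Finset
open scoped Classical

theorem Fintype.sum_units_add_apply_zero {G₀ M : Type*} [GroupWithZero G₀] [Fintype G₀]
    [AddCommMonoid M] (g : G₀ → M) : ∑ t : G₀ˣ, g t + g 0 = ∑ t, g t := by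
  have himage : univ.map ⟨((↑) : G₀ˣ → G₀), Units.val_injective⟩ = univ.erase 0 := by
    ext x
    simp only [mem_map, mem_univ, true_and, mem_erase, and_true, Function.Embedding.coeFn_mk]
    exact isUnit_iff_ne_zero
  rw [← sum_erase_add univ g (mem_univ 0), ← himage, sum_map]
  rfl

theorem AddMonoidHom.card_nsmul_sum_comp_of_surjective {G H M : Type*} [AddGroup G] [AddGroup H]
    [Fintype G] [Fintype H] [AddCommMonoid M] (L : G →+ H) (hL : Function.Surjective L)
    (g : H → M) : Fintype.card H • ∑ x, g (L x) = Fintype.card G • ∑ y, g y := by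
  have htranslate (y : H) : ∑ x, g (L x) = ∑ x, g (L x + y) := by
    obtain ⟨z, rfl⟩ := hL y
    simpa using (Equiv.sum_comp (Equiv.addRight z) (fun x => g (L x))).symm
  calc Fintype.card H • ∑ x, g (L x) = ∑ y : H, ∑ x, g (L x + y) := by
        simp only [← htranslate, sum_const, card_univ]
    _ = ∑ x : G, ∑ y, g (L x + y) := sum_comm
    _ = Fintype.card G • ∑ y, g y := by
        rw [← card_univ, ← sum_const]
        exact sum_congr rfl fun x _ => Equiv.sum_comp (Equiv.addLeft (L x)) g

namespace HomogeneousFourier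

variable (R : Type*) {F : Type*} [Field F] [Fintype F]

noncomputable def xi [Ring R] (x : F) : R := if x = 0 then (Fintype.card F : R) - 1 else -1

variable {R}

theorem xi_zero [Ring R] : xi R (0 : F) = (Fintype.card F : R) - 1 := if_pos rfl

theorem xi_of_ne_zero [Ring R] {x : F} (hx : x ≠ 0) : xi R x = -1 := if_neg hx

theorem card_units_cast [Ring R] : (Fintype.card Fˣ : R) = (Fintype.card F : R) - 1 := by
  rw [Fintype.card_units, Nat.cast_sub Fintype.card_pos, Nat.cast_one]

theorem sum_xi [Ring R] : ∑ x : F, xi R x = 0 := by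
  rw [← Fintype.sum_units_add_apply_zero, xi_zero]
  simp only [fun t : Fˣ => xi_of_ne_zero (R := R) t.ne_zero, sum_const, card_univ, nsmul_eq_mul,
    card_units_cast, mul_neg_one]
  exact neg_add_cancel _

theorem xi_mul_xi [CommRing R] (a b : F) : xi R a * xi R b = ∑ t : Fˣ, xi R (a - t * b) := by
  by_cases hb : b = 0
  · simp [hb, xi_zero, card_units_cast, mul_comm]
  · have hshift : ∑ t : F, xi R (a - t * b) = 0 := by
      rw [← sum_xi (R := R) (F := F)]
      exact Equiv.sum_comp ((Equiv.mulRight₀ b hb).trans (Equiv.subLeft a)) (xi R)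
    rw [← Fintype.sum_units_add_apply_zero] at hshift
    rw [xi_of_ne_zero hb]
    simp only [zero_mul, sub_zero] at hshift
    linear_combination -hshift

section Transform

variable (F) {V : Type*} [AddCommGroup V] [Module F V] [Fintype V] [Fintype (V →ₗ[F] F)] [Field R]

noncomputable def transform (f : V → R) (φ : V →ₗ[F] F) : R :=
  (-1) ^ Module.finrank F V / ((Fintype.card F : R) - 1) * ∑ w, xi R (φ w) * f w

variable {F}

noncomputable def dualTransform (g : (V →ₗ[F] F) → R) (v : V) : R :=
  (-1) ^ Module.finrank F V / ((Fintype.card F : R) - 1) * ∑ φ, xi R (φ v) * g φ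

end Transform

section Dual

variable {V : Type*} [AddCommGroup V] [Module F V]

theorem sum_units_sum_ite_smul_eq [Ring R] [Fintype V] {f : V → R}
    (hf : ∀ (t : Fˣ) (v : V), f ((t : F) • v) = f v) (v : V) :
    ∑ t : Fˣ, ∑ w, (if v = (t : F) • w then f w else 0) = ((Fintype.card F : R) - 1) * f v := by
  have hfiber (t : Fˣ) : ∑ w, (if v = (t : F) • w then f w else 0) = f v := by
    simp_rw [← Units.smul_def, eq_comm (a := v), smul_eq_iff_eq_inv_smul, sum_ite_eq', mem_univ,
      if_true, Units.smul_def, hf]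
  simp only [hfiber, sum_const, card_univ, card_units_cast, nsmul_eq_mul]

variable [Fintype (V →ₗ[F] F)]

theorem card_dual : Fintype.card (V →ₗ[F] F) = Fintype.card F ^ Module.finrank F V := by
  rw [Module.card_eq_pow_finrank (K := F) (V := V →ₗ[F] F), Subspace.dual_finrank_eq]

variable [Field R] [CharZero R]

theorem sum_xi_apply (u : V) : ∑ φ : V →ₗ[F] F, xi R (φ u) =
    if u = 0 then ((Fintype.card F : R) - 1) * (Fintype.card F : R) ^ Module.finrank F V
    else 0 := by
  split_ifs with hu
  · simp only [hu, map_zero, xi_zero, sum_const, card_univ, card_dual, nsmul_eq_mul,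
      Nat.cast_pow, mul_comm]
  · have hsurj : Function.Surjective (Module.Dual.eval F V u) := by
      refine (Module.Dual.eval F V u).surjective_or_eq_zero.resolve_right fun h => hu ?_
      rw [← Module.forall_dual_apply_eq_zero_iff F]
      exact fun φ => LinearMap.congr_fun h φ
    have h := (Module.Dual.eval F V u).toAddMonoidHom.card_nsmul_sum_comp_of_surjective hsurj
      (xi R)
    simp only [sum_xi, smul_zero] at h
    exact (smul_eq_zero_iff_right Fintype.card_ne_zero).mp h

theorem sum_xi_apply_mul_xi_apply (v w : V) :
    ∑ φ : V →ₗ[F] F, xi R (φ v) * xi R (φ w) = ∑ t : Fˣ,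
      if v = (t : F) • w then
        ((Fintype.card F : R) - 1) * (Fintype.card F : R) ^ Module.finrank F V
      else 0 := by
  calc ∑ φ : V →ₗ[F] F, xi R (φ v) * xi R (φ w)
      = ∑ φ : V →ₗ[F] F, ∑ t : Fˣ, xi R (φ (v - (t : F) • w)) := by
        simp only [xi_mul_xi, map_sub, map_smul, smul_eq_mul]
    _ = ∑ t : Fˣ, ∑ φ : V →ₗ[F] F, xi R (φ (v - (t : F) • w)) := sum_comm
    _ = _ := by simp only [sum_xi_apply, sub_eq_zero]

theorem dualTransform_transform [Fintype V] {f : V → R}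
    (hf : ∀ (t : Fˣ) (v : V), f ((t : F) • v) = f v) (v : V) :
    dualTransform (transform F f) v = (Fintype.card F : R) ^ Module.finrank F V * f v := by
  set c : R := (-1) ^ Module.finrank F V / ((Fintype.card F : R) - 1)
  have hq : (Fintype.card F : R) - 1 ≠ 0 :=
    sub_ne_zero.mpr (by exact_mod_cast (Fintype.one_lt_card (α := F)).ne')
  have hnorm : c * c * ((Fintype.card F : R) - 1) ^ 2 = 1 := by
    rw [div_mul_div_comm, ← mul_pow, neg_one_mul, neg_neg, one_pow, ← sq, one_div_mul_cancel]
    exact pow_ne_zero 2 hq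
  calc dualTransform (transform F f) v
      = c * c * ∑ w, (∑ φ : V →ₗ[F] F, xi R (φ v) * xi R (φ w)) * f w := by
        simp only [dualTransform, transform, mul_sum, sum_mul]
        rw [sum_comm]
        exact sum_congr rfl fun _ _ => sum_congr rfl fun _ _ => by ring
    _ = c * c * (((Fintype.card F : R) - 1) * (Fintype.card F : R) ^ Module.finrank F V *
          ∑ t : Fˣ, ∑ w, (if v = (t : F) • w then f w else 0)) := by
        simp only [sum_xi_apply_mul_xi_apply, sum_mul, ite_mul, zero_mul, mul_sum, mul_ite,
          mul_zero, mul_assoc]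
        rw [sum_comm]
    _ = (Fintype.card F : R) ^ Module.finrank F V * f v := by
        rw [sum_units_sum_ite_smul_eq hf]
        linear_combination (Fintype.card F : R) ^ Module.finrank F V * f v * hnorm

end Dual

end HomogeneousFourier

/-- Involutivity of the homogeneous arithmetic Fourier transform: if f : V → ℚ is
F_qˣ-invariant, then T_{V*}(T_V f) = q^d · f. -/
theorem stmt4 (F V : Type*) [Field F] [Fintype F] [AddCommGroup V] [Module F V]
    [Fintype V] [Fintype (V →ₗ[F] F)] (f : V → ℚ)
    (hf : ∀ (t : Fˣ) (v : V), f ((t : F) • v) = f v) (v : V) :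
    ((-1 : ℚ) ^ (Module.finrank F V) / ((Fintype.card F : ℚ) - 1)) *
      ∑ φ : V →ₗ[F] F, (if φ v = 0 then (Fintype.card F : ℚ) - 1 else -1) *
        (((-1 : ℚ) ^ (Module.finrank F V) / ((Fintype.card F : ℚ) - 1)) *
          ∑ w : V, (if φ w = 0 then (Fintype.card F : ℚ) - 1 else -1) * f w) =
    (Fintype.card F : ℚ) ^ (Module.finrank F V) * f v :=
  HomogeneousFourier.dualTransform_transform hf v
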